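/- arXiv:1009.1647 — 3 statements merged into one kernel-verified Lean document; each statement's English description precedes it below -/
import Mathlib

section
/- Let G be a group with a convergence group action on a compact metrizable space M with at least three points, and let H and J be dynamically quasiconvex subgroups of G such that every point of Λ(H) is either a conical limit point of H or a bounded parabolic point of H, and every point of Λ(J) is either a conical limit point of J or a bounded parabolic point of J. If Λ(H) ⊆ Λ(J), then either Λ(H ∩ J) = Λ(H), or H is a parabolic subgroup. -/
open Pointwise Filter Topology Set

section ConvergenceGroups

variable (G M : Type*) [Group G] [TopologicalSpace M] [MulAction G M]

/-- A convergence group action: the action is by homeomorphisms (each element acts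
continuously, hence as a homeomorphism since the action is by a group), and the induced
diagonal action on the space of distinct triples of points of `M` is properly
discontinuous. -/
def IsConvergenceAction : Prop :=
  (∀ g : G, Continuous fun x : M => g • x) ∧
    ∀ K L : Set (M × M × M), IsCompact K → IsCompact L →
      (∀ t ∈ K ∪ L, t.1 ≠ t.2.1 ∧ t.1 ≠ t.2.2 ∧ t.2.1 ≠ t.2.2) →
      {g : G | ((g • K) ∩ L).Nonempty}.Finite

/-- The limit set of a subgroup `H ≤ G`: the set of accumulation points in `M` of
the `H`-orbits of points of `M`. -/
def limitSet (H : Subgroup G) : Set M :=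
  {x : M | ∃ m : M, x ∈ closure (((fun h : G => h • m) '' (H : Set G)) \ {x})}

/-- `z` is a conical limit point of the subgroup `H`. -/
def IsConicalLimitPoint (H : Subgroup G) (z : M) : Prop :=
  ∃ (h : ℕ → G) (a b : M), (∀ n, h n ∈ H) ∧ a ≠ b ∧
    Tendsto (fun n => h n • z) atTop (nhds a) ∧
    ∀ q : M, q ≠ z → Tendsto (fun n => h n • q) atTop (nhds b)

/-- `g` is loxodromic: it has infinite order and fixes exactly two points of `M`. -/
def IsLoxodromic (g : G) : Prop :=
  ¬ IsOfFinOrder g ∧ {x : M | g • x = x}.encard = 2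

/-- `p` is a bounded parabolic point of the subgroup `H`: its stabilizer in `H` is an
infinite subgroup containing no loxodromic element, which acts cocompactly on
`Λ(H) \ {p}`. -/
def IsBoundedParabolicPoint (H : Subgroup G) (p : M) : Prop :=
  ((H ⊓ MulAction.stabilizer G p : Subgroup G) : Set G).Infinite ∧
  (∀ g ∈ H ⊓ MulAction.stabilizer G p, ¬ IsLoxodromic G M g) ∧
  ∃ C : Set M, IsCompact C ∧ C ⊆ limitSet G M H \ {p} ∧
    limitSet G M H \ {p} ⊆ ⋃ g ∈ (H ⊓ MulAction.stabilizer G p : Subgroup G), g • C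

/-- `H` is dynamically quasiconvex: for every pair of disjoint closed subsets `K, L` of
`M`, the set of cosets `gH` with `gΛ(H)` meeting both `K` and `L` is finite. -/
def DynamicallyQuasiconvex (H : Subgroup G) : Prop :=
  ∀ K L : Set M, IsClosed K → IsClosed L → Disjoint K L →
    ((fun g : G => (g : G ⧸ H)) ''
      {g : G | ((g • limitSet G M H) ∩ K).Nonempty ∧
               ((g • limitSet G M H) ∩ L).Nonempty}).Finite

end ConvergenceGroups

/-
If `H` has no loxodromic element, either `H` is finite, so that both limit sets are
empty, or `H` is parabolic. Otherwise `H` contains a loxodromic `g`; an infinite subgroup fixing a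
point has that point in its limit set, so the fixed points of `g` lie in `Λ(H)`, and every
`z ∈ Λ(H)` has a partner `w ∈ Λ(H) \ {z}`. Both `z` and `w` lie in `Λ(J)`, and dynamical
quasiconvexity of `J` says that the elements moving `Λ(J)` to meet two fixed disjoint closed sets
lie in finitely many cosets of `J`.
* If `z` is conical, the sequence of `H` witnessing it eventually moves `z` and `w` near two
  distinct points, so infinitely many of its terms lie in one coset `gJ`; translated by `g⁻¹`
  they show that `z` is conical, hence a limit point, for `H ∩ J`.
* If `z` is bounded parabolic, every element of its infinite stabilizer in `H` moves `Λ(J)` to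
  meet both `{z}` and `{w}`, so this stabilizer meets `J` in an infinite subgroup fixing `z`.
-/

open TopologicalSpace

theorem exists_ne_and_ne {α : Type*} (h3 : ∃ a b c : α, a ≠ b ∧ a ≠ c ∧ b ≠ c) (x y : α) :
    ∃ z, z ≠ x ∧ z ≠ y := by
  obtain ⟨a, b, c, hab, hac, hbc⟩ := h3
  by_contra! h
  rcases eq_or_ne a x with rfl | hax
  · exact hbc ((h b hab.symm).trans (h c hac.symm).symm)
  · rcases eq_or_ne b x with rfl | hbx
    · exact hac ((h a hax).trans (h c hbc.symm).symm)
    · exact hab ((h a hax).trans (h b hbx).symm)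

section ConvergenceGroups

variable {G M : Type*} [Group G] [TopologicalSpace M] [MulAction G M]

variable (M) in
def distinctTriples : Set (M × M × M) :=
  {t | t.1 ≠ t.2.1 ∧ t.1 ≠ t.2.2 ∧ t.2.1 ≠ t.2.2}

theorem isOpen_distinctTriples [T2Space M] : IsOpen (distinctTriples M) :=
  (isOpen_ne_fun continuous_fst (continuous_fst.comp continuous_snd)).inter
    ((isOpen_ne_fun continuous_fst (continuous_snd.comp continuous_snd)).inter
      (isOpen_ne_fun (continuous_fst.comp continuous_snd) (continuous_snd.comp continuous_snd)))

theorem IsConvergenceAction.not_tendsto_cofinite [T2Space M] (hconv : IsConvergenceAction G M)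
    {g : ℕ → G} {t : ℕ → M × M × M} {a b : M × M × M} (ht : Tendsto t atTop (𝓝 a))
    (hgt : Tendsto (fun n => g n • t n) atTop (𝓝 b)) (ha : a ∈ distinctTriples M)
    (hb : b ∈ distinctTriples M) : ¬ Tendsto g atTop cofinite := by
  intro hg
  obtain ⟨N, hN⟩ := eventually_atTop.1 <|
    (ht.eventually (isOpen_distinctTriples.mem_nhds ha)).and
      (hgt.eventually (isOpen_distinctTriples.mem_nhds hb))
  have hshift := tendsto_add_atTop_nat N
  set K := insert a (range fun k => t (k + N))
  set L := insert b (range fun k => g (k + N) • t (k + N))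
  have hfin : {x : G | (x • K ∩ L).Nonempty}.Finite :=
    hconv.2 K L (ht.comp hshift).isCompact_insert_range (hgt.comp hshift).isCompact_insert_range
      (by
        rintro x ((rfl | ⟨k, rfl⟩) | (rfl | ⟨k, rfl⟩))
        exacts [ha, (hN _ le_add_self).1, hb, (hN _ le_add_self).2])
  obtain ⟨k, hk⟩ := ((hg.comp hshift).eventually hfin.compl_mem_cofinite).exists
  exact hk ⟨_, smul_mem_smul_set (mem_insert_of_mem _ ⟨k, rfl⟩), mem_insert_of_mem _ ⟨k, rfl⟩⟩

theorem tendsto_cofinite_of_tendsto_smul [T2Space M] {g : ℕ → G} {x y b : M} (hxy : x ≠ y)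
    (hx : Tendsto (fun n => g n • x) atTop (𝓝 b)) (hy : Tendsto (fun n => g n • y) atTop (𝓝 b)) :
    Tendsto g atTop cofinite := by
  rw [← Nat.cofinite_eq_atTop]
  refine Tendsto.cofinite_of_finite_preimage_singleton fun c => ?_
  by_contra hc
  have hfreq : ∃ᶠ n in atTop, g n = c := Nat.frequently_atTop_iff_infinite.2 hc
  have hcx := tendsto_nhds_unique_of_frequently_eq hx tendsto_const_nhds
    (hfreq.mono fun n hn => by rw [hn])
  have hcy := tendsto_nhds_unique_of_frequently_eq hy tendsto_const_nhds
    (hfreq.mono fun n hn => by rw [hn])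
  exact hxy (MulAction.injective c (hcx.symm.trans hcy))

theorem limitSet_mono {H K : Subgroup G} (h : H ≤ K) : limitSet G M H ⊆ limitSet G M K :=
  fun _ ⟨m, hx⟩ => ⟨m, closure_mono (sdiff_subset_sdiff_left (image_mono h)) hx⟩

theorem limitSet_eq_empty_of_finite [T1Space M] {H : Subgroup G} (hH : (H : Set G).Finite) :
    limitSet G M H = ∅ :=
  eq_empty_of_forall_notMem fun x ⟨m, hx⟩ => by
    rw [((hH.image _).sdiff).isClosed.closure_eq] at hx
    exact hx.2 rfl

theorem mem_limitSet_of_tendsto {H : Subgroup G} {h : ℕ → G} {m x : M} (hH : ∀ n, h n ∈ H)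
    (hx : Tendsto (fun n => h n • m) atTop (𝓝 x)) (hne : ∀ᶠ n in atTop, h n • m ≠ x) :
    x ∈ limitSet G M H :=
  ⟨m, mem_closure_of_tendsto hx (hne.mono fun n hn => ⟨mem_image_of_mem _ (hH n), hn⟩)⟩

theorem smul_mem_limitSet [ContinuousConstSMul G M] {H : Subgroup G} {g : G} {x : M}
    (hg : g ∈ H) (hx : x ∈ limitSet G M H) : g • x ∈ limitSet G M H := by
  obtain ⟨m, hm⟩ := hx
  refine ⟨m, ?_⟩
  have horbit : (fun h : G => h • m) '' (H : Set G) = MulAction.orbit H m := by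
    ext
    simp [MulAction.mem_orbit_iff, Subgroup.smul_def]
  have hinv : g • MulAction.orbit H m = MulAction.orbit H m := MulAction.smul_orbit (⟨g, hg⟩ : H) m
  have := smul_mem_smul_set (a := g) hm
  rwa [← closure_smul, smul_set_sdiff, smul_set_singleton, horbit, hinv, ← horbit] at this

/- If `p ∉ Λ(Q)`, the `Q`-orbit of a point `≠ p` never accumulates at `p`. A divergent sequence
`h n` in `Q` then sends two points `a, b ≠ p` to the same limit `x`, or `(a, b, p)` would violate
the convergence property; and if `h n⁻¹ • y → w` for some `y ∉ {p, x}`, the triples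
`(h n⁻¹ • y, p, e)` with `e ∈ {a, b} \ {w}` violate it. -/
theorem IsConvergenceAction.mem_limitSet_of_le_stabilizer [CompactSpace M] [MetrizableSpace M]
    (hconv : IsConvergenceAction G M) (h3 : ∃ a b c : M, a ≠ b ∧ a ≠ c ∧ b ≠ c)
    {Q : Subgroup G} (hQ : (Q : Set G).Infinite) {p : M} (hQp : Q ≤ MulAction.stabilizer G p) :
    p ∈ limitSet G M Q := by
  by_contra hp
  have hfix : ∀ {g : G}, g ∈ Q → g • p = p := fun hg => hQp hg
  have hlim : ∀ {h : ℕ → G} {m x : M}, (∀ n, h n ∈ Q) → m ≠ p →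
      Tendsto (fun n => h n • m) atTop (𝓝 x) → x ≠ p := by
    rintro h m x hQ hm hx rfl
    exact hp (mem_limitSet_of_tendsto hQ hx (Eventually.of_forall fun n hn =>
      hm ((smul_left_cancel_iff (h n)).1 (hn.trans (hfix (hQ n)).symm))))
  set ι := hQ.natEmbedding _
  set h : ℕ → G := fun n => ι n
  have hQh : ∀ n, h n ∈ Q := fun n => (ι n).2
  have hh : Tendsto h atTop cofinite :=
    Nat.cofinite_eq_atTop ▸ (Subtype.val_injective.comp ι.injective).tendsto_cofinite
  obtain ⟨a, hap, -⟩ := exists_ne_and_ne h3 p p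
  obtain ⟨b, hbp, hba⟩ := exists_ne_and_ne h3 p a
  obtain ⟨⟨x, x'⟩, φ, hφ, hxx'⟩ := CompactSpace.tendsto_subseq fun n => (h n • a, h n • b)
  have hk := hh.comp hφ.tendsto_atTop
  have hkp : Tendsto (fun n => h (φ n) • p) atTop (𝓝 p) :=
    tendsto_const_nhds.congr fun n => (hfix (hQh _)).symm
  have hxp : x ≠ p := hlim (fun n => hQh _) hap hxx'.fst_nhds
  have hx'x : x' = x := by
    by_contra hne
    exact hconv.not_tendsto_cofinite (t := fun _ => (a, b, p)) tendsto_const_nhds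
      (hxx'.fst_nhds.prodMk_nhds (hxx'.snd_nhds.prodMk_nhds hkp)) ⟨hba.symm, hap, hbp⟩
      ⟨Ne.symm hne, hxp, hlim (fun n => hQh _) hbp hxx'.snd_nhds⟩ hk
  obtain ⟨y, hyp, hyx⟩ := exists_ne_and_ne h3 p x
  obtain ⟨w, ψ, hψ, hw⟩ := CompactSpace.tendsto_subseq fun n => (h (φ n))⁻¹ • y
  have hwp : w ≠ p := hlim (fun n => Q.inv_mem (hQh _)) hyp hw
  obtain ⟨e, hew, hep, he⟩ : ∃ e, e ≠ w ∧ e ≠ p ∧ Tendsto (fun n => h (φ n) • e) atTop (𝓝 x) := by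
    rcases eq_or_ne a w with rfl | haw
    · exact ⟨b, hba, hbp, hx'x ▸ hxx'.snd_nhds⟩
    · exact ⟨a, haw, hap, hxx'.fst_nhds⟩
  exact hconv.not_tendsto_cofinite (t := fun n => ((h (φ (ψ n)))⁻¹ • y, p, e))
    (hw.prodMk_nhds tendsto_const_nhds)
    ((tendsto_const_nhds.congr fun n => (smul_inv_smul _ _).symm).prodMk_nhds
      ((hkp.comp hψ.tendsto_atTop).prodMk_nhds (he.comp hψ.tendsto_atTop)))
    ⟨hwp, hew.symm, hep.symm⟩ ⟨hyp, hyx, hxp.symm⟩ (hk.comp hψ.tendsto_atTop)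

theorem IsLoxodromic.exists_mem_limitSet_ne [CompactSpace M] [MetrizableSpace M]
    (hconv : IsConvergenceAction G M) (h3 : ∃ a b c : M, a ≠ b ∧ a ≠ c ∧ b ≠ c)
    {H : Subgroup G} {g : G} (hg : IsLoxodromic G M g) (hgH : g ∈ H) (z : M) :
    ∃ w ∈ limitSet G M H, w ≠ z := by
  obtain ⟨p₁, p₂, hp, hfix⟩ := encard_eq_two.1 hg.2
  have hfixed : ∀ q ∈ ({p₁, p₂} : Set M), g • q = q := fun q hq => by
    rw [← hfix] at hq
    exact hq
  obtain ⟨w, hw, hwz⟩ : ∃ w, g • w = w ∧ w ≠ z := by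
    rcases eq_or_ne p₁ z with rfl | hp₁
    · exact ⟨p₂, hfixed p₂ (mem_insert_of_mem _ rfl), hp.symm⟩
    · exact ⟨p₁, hfixed p₁ (mem_insert _ _), hp₁⟩
  exact ⟨w, limitSet_mono (Subgroup.zpowers_le.2 hgH)
    (hconv.mem_limitSet_of_le_stabilizer h3 (infinite_zpowers.2 hg.1)
      (Subgroup.zpowers_le.2 hw)), hwz⟩

/- For `x ∉ {a, b}`, the preimages `h n⁻¹ • x` can only accumulate at `z`: at any other point the
triples `(h n⁻¹ • x, z, e)` would violate the convergence property. -/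
theorem IsConicalLimitPoint.mem_limitSet [CompactSpace M] [MetrizableSpace M]
    (hconv : IsConvergenceAction G M) (h3 : ∃ a b c : M, a ≠ b ∧ a ≠ c ∧ b ≠ c)
    {K : Subgroup G} {z : M} (hz : IsConicalLimitPoint G M K z) : z ∈ limitSet G M K := by
  obtain ⟨h, a, b, hK, hab, ha, hb⟩ := hz
  obtain ⟨q₁, hq₁z, -⟩ := exists_ne_and_ne h3 z z
  obtain ⟨q₂, hq₂z, hq₂q₁⟩ := exists_ne_and_ne h3 z q₁
  have hh := tendsto_cofinite_of_tendsto_smul hq₂q₁.symm (hb q₁ hq₁z) (hb q₂ hq₂z)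
  obtain ⟨x, hxa, hxb⟩ := exists_ne_and_ne h3 a b
  obtain ⟨w, φ, hφ, hw⟩ := CompactSpace.tendsto_subseq fun n => (h n)⁻¹ • x
  have hwz : w = z := by
    by_contra hwz
    obtain ⟨e, hez, hew⟩ := exists_ne_and_ne h3 z w
    exact hconv.not_tendsto_cofinite (t := fun n => ((h (φ n))⁻¹ • x, z, e))
      (hw.prodMk_nhds tendsto_const_nhds)
      ((tendsto_const_nhds.congr fun n => (smul_inv_smul _ _).symm).prodMk_nhds
        ((ha.prodMk_nhds (hb e hez)).comp hφ.tendsto_atTop))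
      ⟨hwz, Ne.symm hew, Ne.symm hez⟩ ⟨hxa, hxb, hab⟩ (hh.comp hφ.tendsto_atTop)
  subst hwz
  refine mem_limitSet_of_tendsto (fun n => K.inv_mem (hK (φ n))) hw ?_
  filter_upwards [(ha.comp hφ.tendsto_atTop).eventually_ne hxa.symm] with n hn hx
  exact hn (by rw [Function.comp_apply, ← hx, smul_inv_smul])

theorem IsConicalLimitPoint.inf [T25Space M] [ContinuousConstSMul G M] {H J : Subgroup G}
    {z w : M} (hz : IsConicalLimitPoint G M H z) (hJ : DynamicallyQuasiconvex G M J)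
    (hzJ : z ∈ limitSet G M J) (hwJ : w ∈ limitSet G M J) (hwz : w ≠ z) :
    IsConicalLimitPoint G M (H ⊓ J) z := by
  obtain ⟨h, a, b, hH, hab, ha, hb⟩ := hz
  obtain ⟨U, hU, V, hV, hUV⟩ := exists_nhds_disjoint_closure hab
  have hev : ∀ᶠ n in atTop, h n ∈ {g : G | (g • limitSet G M J ∩ closure U).Nonempty ∧
      (g • limitSet G M J ∩ closure V).Nonempty} := by
    filter_upwards [ha.eventually (mem_of_superset hU subset_closure),
      (hb w hwz).eventually (mem_of_superset hV subset_closure)] with n hzn hwn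
    exact ⟨⟨_, smul_mem_smul_set hzJ, hzn⟩, ⟨_, smul_mem_smul_set hwJ, hwn⟩⟩
  obtain ⟨c, -, hc⟩ := (hJ _ _ isClosed_closure isClosed_closure hUV).frequently_exists
    (p := fun c n => (h n : G ⧸ J) = c) |>.1
    (hev.frequently.mono fun n hn => ⟨_, mem_image_of_mem _ hn, rfl⟩)
  obtain ⟨φ, hφm, hφ⟩ := extraction_of_frequently_atTop hc
  set g := h (φ 0)
  refine ⟨fun n => g⁻¹ * h (φ n), g⁻¹ • a, g⁻¹ • b,
    fun n => ⟨H.mul_mem (H.inv_mem (hH _)) (hH _), QuotientGroup.eq.1 ((hφ 0).trans (hφ n).symm)⟩,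
    (MulAction.injective _).ne hab, ?_, fun q hq => ?_⟩
  · simp only [mul_smul]
    exact (ha.comp hφm.tendsto_atTop).const_smul _
  · simp only [mul_smul]
    exact ((hb q hq).comp hφm.tendsto_atTop).const_smul _

theorem Subgroup.infinite_inf_of_finite_image_mk {S J : Subgroup G} (hS : (S : Set G).Infinite)
    (hfin : (((↑) : G → G ⧸ J) '' S).Finite) : ((S ⊓ J : Subgroup G) : Set G).Infinite := by
  obtain ⟨c, -, hc⟩ := hfin.frequently_exists (p := fun c g => g ∈ S ∧ (g : G ⧸ J) = c) |>.1
    (hS.frequently_cofinite.mono fun g hg => ⟨_, mem_image_of_mem _ hg, hg, rfl⟩)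
  rw [frequently_cofinite_iff_infinite] at hc
  obtain ⟨g, hgS, hgc⟩ := hc.nonempty
  refine (hc.image (mul_right_injective g⁻¹).injOn).mono ?_
  rintro - ⟨k, ⟨hkS, hkc⟩, rfl⟩
  exact ⟨S.mul_mem (S.inv_mem hgS) hkS, QuotientGroup.eq.1 (hgc.trans hkc.symm)⟩

theorem mem_limitSet_inf_of_infinite_stabilizer [CompactSpace M] [MetrizableSpace M]
    (hconv : IsConvergenceAction G M) (h3 : ∃ a b c : M, a ≠ b ∧ a ≠ c ∧ b ≠ c)
    {H J : Subgroup G} (hJ : DynamicallyQuasiconvex G M J) (hsub : limitSet G M H ⊆ limitSet G M J)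
    {p q : M} (hpH : p ∈ limitSet G M H) (hqH : q ∈ limitSet G M H) (hqp : q ≠ p)
    (hp : ((H ⊓ MulAction.stabilizer G p : Subgroup G) : Set G).Infinite) :
    p ∈ limitSet G M (H ⊓ J) := by
  have : ContinuousConstSMul G M := ⟨hconv.1⟩
  have hmeet : ((H ⊓ MulAction.stabilizer G p : Subgroup G) : Set G) ⊆
      {g : G | (g • limitSet G M J ∩ {p}).Nonempty ∧ (g • limitSet G M J ∩ {q}).Nonempty} := by
    rintro g ⟨hgH, hgp⟩
    exact ⟨⟨p, mem_smul_set.2 ⟨p, hsub hpH, hgp⟩, rfl⟩,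
      ⟨q, mem_smul_set.2 ⟨g⁻¹ • q, hsub (smul_mem_limitSet (H.inv_mem hgH) hqH),
        smul_inv_smul g q⟩, rfl⟩⟩
  have hPJ := Subgroup.infinite_inf_of_finite_image_mk hp
    ((hJ {p} {q} isClosed_singleton isClosed_singleton
      (disjoint_singleton.2 hqp.symm)).subset (image_mono hmeet))
  exact limitSet_mono (le_inf (inf_le_left.trans inf_le_left) inf_le_right)
    (hconv.mem_limitSet_of_le_stabilizer h3 hPJ (inf_le_left.trans inf_le_right))

end ConvergenceGroups

theorem limit_set_inclusion_dichotomy_general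
    {G M : Type*} [Group G] [TopologicalSpace M] [CompactSpace M]
    [TopologicalSpace.MetrizableSpace M] [MulAction G M]
    (hconv : IsConvergenceAction G M)
    (h3 : ∃ a b c : M, a ≠ b ∧ a ≠ c ∧ b ≠ c)
    (H J : Subgroup G)
    (hdqcJ : DynamicallyQuasiconvex G M J)
    (hgfH : ∀ z ∈ limitSet G M H,
      IsConicalLimitPoint G M H z ∨ IsBoundedParabolicPoint G M H z)
    (hsub : limitSet G M H ⊆ limitSet G M J) :
    limitSet G M (H ⊓ J) = limitSet G M H ∨
      ((H : Set G).Infinite ∧ ∀ g ∈ H, ¬ IsLoxodromic G M g) := by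
  have : ContinuousConstSMul G M := ⟨hconv.1⟩
  by_cases hlox : ∃ g ∈ H, IsLoxodromic G M g
  · obtain ⟨g, hgH, hg⟩ := hlox
    refine Or.inl ((limitSet_mono inf_le_left).antisymm fun z hz => ?_)
    obtain ⟨w, hwH, hwz⟩ := hg.exists_mem_limitSet_ne hconv h3 hgH z
    rcases hgfH z hz with hcon | hpar
    · exact (hcon.inf hdqcJ (hsub hz) (hsub hwH) hwz).mem_limitSet hconv h3
    · exact mem_limitSet_inf_of_infinite_stabilizer hconv h3 hdqcJ hsub hz hwH hwz hpar.1
  push Not at hlox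
  by_cases hH : (H : Set G).Finite
  · left
    rw [limitSet_eq_empty_of_finite hH,
      limitSet_eq_empty_of_finite (hH.subset (SetLike.coe_subset_coe.2 inf_le_left))]
  · exact Or.inr ⟨hH, hlox⟩

/-- if `H` and `J` are dynamically quasiconvex, all their limit points are
conical or bounded parabolic, and `Λ(H) ⊆ Λ(J)`, then either `Λ(H ∩ J) = Λ(H)` or `H`
is a parabolic subgroup. -/
theorem limit_set_inclusion_dichotomy
    {G M : Type*} [Group G] [TopologicalSpace M] [CompactSpace M]
    [TopologicalSpace.MetrizableSpace M] [MulAction G M]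
    (hconv : IsConvergenceAction G M)
    (h3 : ∃ a b c : M, a ≠ b ∧ a ≠ c ∧ b ≠ c)
    (H J : Subgroup G)
    (hdqcH : DynamicallyQuasiconvex G M H) (hdqcJ : DynamicallyQuasiconvex G M J)
    (hgfH : ∀ z ∈ limitSet G M H,
      IsConicalLimitPoint G M H z ∨ IsBoundedParabolicPoint G M H z)
    (hgfJ : ∀ z ∈ limitSet G M J,
      IsConicalLimitPoint G M J z ∨ IsBoundedParabolicPoint G M J z)
    (hsub : limitSet G M H ⊆ limitSet G M J) :
    limitSet G M (H ⊓ J) = limitSet G M H ∨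
      ((H : Set G).Infinite ∧ ∀ g ∈ H, ¬ IsLoxodromic G M g) :=
  limit_set_inclusion_dichotomy_general hconv h3 H J hdqcJ hgfH hsub
end

section
/- Let G be a group with a convergence group action on a compact metrizable space M with at least three points, and let H be a dynamically quasiconvex subgroup of G that is maximal in its limit set, i.e. H = Stab_G(Λ(H)), the setwise stabilizer of Λ(H) in G. Then for any g ∈ G \ H, one has gΛ(H) ⊄ Λ(H), i.e. the inclusion gΛ(H) ⊆ Λ(H) fails. -/
open Pointwise Filter Topology Set

/-!
If `g ∉ H = Stab_G(Λ)` and `gΛ ⊆ Λ`, the inclusion is strict, so no positive power of `g`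
stabilises `Λ` and the cosets `g⁻ⁿH` are pairwise distinct. Their translates `g⁻ⁿΛ ⊇ Λ` all
contain any two distinct points of `Λ`, which dynamical quasiconvexity forbids for infinitely
many cosets. When `Λ` has at most one point, `gΛ ⊆ Λ` already forces `gΛ = Λ`.
-/

section SetTranslates

variable {G α : Type*} [Group G] [MulAction G α] {g : G} {s : Set α}

theorem Set.Finite.smul_set_eq_of_smul_set_subset (hs : s.Finite) (h : g • s ⊆ s) :
    g • s = s :=
  hs.eq_of_subset_of_encard_le' h (by rw [encard_smul_set])

theorem pow_smul_set_subset_of_smul_set_subset (h : g • s ⊆ s) (n : ℕ) : g ^ n • s ⊆ s := by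
  induction n with
  | zero => simp
  | succ n ih =>
    calc g ^ (n + 1) • s = g • g ^ n • s := by rw [pow_succ', mul_smul]
      _ ⊆ g • s := smul_set_mono ih
      _ ⊆ s := h

theorem subset_inv_pow_smul_set_of_smul_set_subset (h : g • s ⊆ s) (n : ℕ) :
    s ⊆ g⁻¹ ^ n • s := by
  rw [inv_pow, ← smul_set_subset_iff_subset_inv_smul_set]
  exact pow_smul_set_subset_of_smul_set_subset h n

theorem pow_smul_set_ne_of_smul_set_ssubset (h : g • s ⊂ s) {k : ℕ} (hk : 0 < k) :
    g ^ k • s ≠ s := by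
  obtain ⟨j, rfl⟩ := Nat.exists_eq_add_one_of_ne_zero hk.ne'
  intro hfix
  have : g ^ (j + 1) • s ⊆ g • s := by
    rw [pow_succ', mul_smul]
    exact smul_set_mono (pow_smul_set_subset_of_smul_set_subset h.subset j)
  rw [hfix] at this
  exact h.ne (h.subset.antisymm this)

end SetTranslates

theorem Subgroup.injective_coe_pow_of_pow_notMem {G : Type*} [Group G] {H : Subgroup G} {g : G}
    (hg : ∀ k : ℕ, 0 < k → g ^ k ∉ H) :
    Function.Injective fun n : ℕ => ((g ^ n : G) : G ⧸ H) := by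
  intro m n hmn
  by_contra hne
  wlog hlt : m < n generalizing m n
  · exact this hmn.symm (Ne.symm hne) (by omega)
  have hdiff : (g ^ m)⁻¹ * g ^ n = g ^ (n - m) := by
    rw [inv_mul_eq_iff_eq_mul, ← pow_add, Nat.add_sub_cancel' hlt.le]
  exact hg (n - m) (by omega) (hdiff ▸ QuotientGroup.eq.mp hmn)

theorem DynamicallyQuasiconvex.finite_coe_of_mem_of_mem {G M : Type*} [Group G]
    [TopologicalSpace M] [T1Space M] [MulAction G M] {H : Subgroup G}
    (hdqc : DynamicallyQuasiconvex G M H) {a b : M} (hab : a ≠ b) :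
    ((fun g : G => (g : G ⧸ H)) ''
      {g : G | a ∈ g • limitSet G M H ∧ b ∈ g • limitSet G M H}).Finite :=
  (hdqc {a} {b} isClosed_singleton isClosed_singleton (disjoint_singleton.mpr hab)).subset
    (image_mono fun _ hg => ⟨⟨a, hg.1, rfl⟩, ⟨b, hg.2, rfl⟩⟩)

theorem no_proper_limit_set_inclusion_of_maximal_general
    {G M : Type*} [Group G] [TopologicalSpace M]
    [TopologicalSpace.MetrizableSpace M] [MulAction G M]
    (H : Subgroup G) (hdqc : DynamicallyQuasiconvex G M H)
    (hmax : (H : Set G) = {g : G | g • limitSet G M H = limitSet G M H}) :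
    ∀ g : G, g ∉ H → ¬ (g • limitSet G M H ⊆ limitSet G M H) := by
  intro g hg hsub
  set Λ := limitSet G M H
  have hmem_iff (x : G) : x ∈ H ↔ x • Λ = Λ := by rw [← SetLike.mem_coe, hmax]; rfl
  have hne : g • Λ ≠ Λ := fun h => hg ((hmem_iff g).mpr h)
  rcases Λ.subsingleton_or_nontrivial with hss | ⟨a, ha, b, hb, hab⟩
  · exact hne (hss.finite.smul_set_eq_of_smul_set_subset hsub)
  have hpow : ∀ k : ℕ, 0 < k → g⁻¹ ^ k ∉ H := fun k hk hmem => by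
    rw [inv_pow, inv_mem_iff, hmem_iff] at hmem
    exact pow_smul_set_ne_of_smul_set_ssubset (hsub.ssubset_of_ne hne) hk hmem
  refine (hdqc.finite_coe_of_mem_of_mem hab).not_infinite <|
    infinite_of_injective_forall_mem (Subgroup.injective_coe_pow_of_pow_notMem hpow) fun n => ?_
  have hΛ := subset_inv_pow_smul_set_of_smul_set_subset hsub n
  exact ⟨_, ⟨hΛ ha, hΛ hb⟩, rfl⟩

/-- if `H` is dynamically quasiconvex and maximal in its limit set, i.e.
`H = Stab_G(Λ(H))`, then no `g ∈ G \ H` satisfies `gΛ(H) ⊆ Λ(H)`. -/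
theorem no_proper_limit_set_inclusion_of_maximal
    {G M : Type*} [Group G] [TopologicalSpace M] [CompactSpace M]
    [TopologicalSpace.MetrizableSpace M] [MulAction G M]
    (hconv : IsConvergenceAction G M)
    (h3 : ∃ a b c : M, a ≠ b ∧ a ≠ c ∧ b ≠ c)
    (H : Subgroup G) (hdqc : DynamicallyQuasiconvex G M H)
    (hmax : (H : Set G) = {g : G | g • limitSet G M H = limitSet G M H}) :
    ∀ g : G, g ∉ H → ¬ (g • limitSet G M H ⊆ limitSet G M H) :=
  no_proper_limit_set_inclusion_of_maximal_general H hdqc hmax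
end

section
/- Let G be a finitely generated group with finite symmetric generating set S and nontrivial Floyd boundary ∂G, and let H be an undistorted finitely generated subgroup of G with finite generating set T ⊆ S such that the limit set Λ(H) ⊆ ∂G satisfies |Λ(H)| ≥ 2. Then there exists a constant ε₀ ≥ 0 such that for any two distinct points p, q ∈ Λ(H) there exists an ε₀-quasigeodesic γ in the Cayley graph Γ(G,S) between p and q whose vertex set lies in H, i.e. a bi-infinite ε₀-quasigeodesic path in Γ(G,S) with all vertices in H whose two ends converge in the Floyd completion 𝔾 to p and q respectively. -/
open Pointwise Filter Topology Set

section Floyd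

variable {G : Type*} [Group G]

/-- The word metric on `G` determined by a generating set `S`: the length of a shortest
word over `S` representing `x⁻¹ * y`. -/
noncomputable def wordDist (S : Set G) (x y : G) : ℕ :=
  sInf {n : ℕ | ∃ l : List G, (∀ a ∈ l, a ∈ S) ∧ l.prod = x⁻¹ * y ∧ l.length = n}

/-- The Floyd length of the edge of the Cayley graph `Γ(G,S)` joining `x` and `y`:
the edge is rescaled by the factor `f(d_S(1,e)) = d_S(1,e)⁻²` (where `d_S(1,e)` is the
word distance from the identity to the edge, and edges at the identity keep length 1). -/
noncomputable def floydEdgeWeight (S : Set G) (x y : G) : ℝ :=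
  ((max 1 (min (wordDist S 1 x) (wordDist S 1 y)) : ℕ) : ℝ)⁻¹ ^ 2

/-- The Floyd length of an edge path in the Cayley graph, recorded as its list of
vertices: the sum of the rescaled lengths of its edges. -/
noncomputable def floydLength (S : Set G) : List G → ℝ
  | [] => 0
  | [_] => 0
  | a :: b :: l => floydEdgeWeight S a b + floydLength S (b :: l)

/-- `l` is (the list of vertices of) an edge path in the Cayley graph `Γ(G,S)` from `x`
to `y`: consecutive vertices are at word distance 1. -/
def IsEdgePath (S : Set G) (x y : G) (l : List G) : Prop :=
  l.head? = some x ∧ l.getLast? = some y ∧ List.Chain' (fun a b => wordDist S a b = 1) l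

/-- The Floyd metric on `G`: the infimum of Floyd lengths of edge paths joining the two
points. -/
noncomputable def floydDist (S : Set G) (x y : G) : ℝ :=
  sInf {r : ℝ | ∃ l : List G, IsEdgePath S x y l ∧ floydLength S l = r}

/-- The limit set in the Floyd completion `𝔾` (with `ι : G → 𝔾` the canonical map) of a
subgroup `H ≤ G`: the set of accumulation points of the `H`-orbits of points of `G`. -/
def floydLimitSet {𝔾 : Type*} [TopologicalSpace 𝔾] (ι : G → 𝔾) (H : Subgroup G) :
    Set 𝔾 :=
  {x : 𝔾 | ∃ g₀ : G, x ∈ closure (((fun h : G => ι (h * g₀)) '' (H : Set G)) \ {x})}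

/-- `H` (with finite generating set `T`) is undistorted in `G` (with finite generating
set `S`): the inclusion `(H, d_T) → (G, d_S)` is a quasi-isometric embedding. -/
def IsUndistorted (S T : Set G) (H : Subgroup G) : Prop :=
  ∃ ε : ℝ, 1 ≤ ε ∧ ∀ x ∈ H, ∀ y ∈ H,
    ε⁻¹ * (wordDist T x y : ℝ) - ε ≤ (wordDist S x y : ℝ) ∧
    (wordDist S x y : ℝ) ≤ ε * (wordDist T x y : ℝ) + ε

end Floyd

/-!
Write `|x| = d_S(1, x)` and choose `a j → p`, `b j → q` in `H` with `|a j|, |b j| → ∞`.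
A `T`-geodesic from `a j` to `b j` is, by undistortedness, a quasigeodesic of `Γ(G,S)`, so
along it the word length grows linearly away from its vertex `c j` closest to `1`; summing
the Floyd weights `|·|⁻²` then bounds the Floyd distance between its ends by
`O(ε³ / |c j|)` (Karlsson's lemma). As `ι (a j)` and `ι (b j)` stay about `dist p q` apart,
the `c j` lie in a fixed ball. Recentred at `c j`, the geodesics take, at each index, values
in a finite ball, so they converge along an ultrafilter to a bi-infinite `T`-geodesic in `H`.
The same summation shows that the part of the `j`-th geodesic beyond index `k` has Floyd
diameter `O(ε² / k)`, so the two ends of the limit converge to `p` and `q`.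
-/

theorem Ultrafilter.exists_forall_eventually_eq {α β γ : Type*} (𝒰 : Ultrafilter α)
    {f : α → β → γ} (hf : ∀ b, ∃ s : Set γ, s.Finite ∧ ∀ᶠ a in 𝒰, f a b ∈ s) :
    ∃ g : β → γ, ∀ b, ∀ᶠ a in 𝒰, f a b = g b := by
  choose s hs hfs using hf
  have : ∀ b, ∃ c, ∀ᶠ a in 𝒰, f a b = c := fun b => by
    obtain ⟨c, -, hc⟩ := (𝒰.map (f · b)).eq_pure_of_finite_mem (hs b) (hfs b)
    exact ⟨c, show {c} ∈ 𝒰.map (f · b) by simp [hc]⟩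
  choose g hg using this
  exact ⟨g, hg⟩

section

variable {G : Type*} [Group G] {S T : Set G} {H : Subgroup G} {ε : ℝ} {x y z : G}
  {w : ℤ → G} {I : Set ℤ} {𝔾 : Type*} [MetricSpace 𝔾] {ι : G → 𝔾}

theorem submonoid_closure_eq_top_of_inv_mem (hsym : ∀ s ∈ S, s⁻¹ ∈ S)
    (hgen : Subgroup.closure S = ⊤) : Submonoid.closure S = ⊤ := by
  have hS : S ∪ S⁻¹ = S := Set.union_eq_left.2 fun s hs => by simpa using hsym _ hs
  rw [← hS, ← Subgroup.closure_toSubmonoid, hgen, Subgroup.top_toSubmonoid]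

theorem wordDist_le_length {l : List G} (hl : ∀ a ∈ l, a ∈ S) (hprod : l.prod = x⁻¹ * y) :
    wordDist S x y ≤ l.length :=
  Nat.sInf_le ⟨l, hl, hprod, rfl⟩

theorem exists_list_length_eq_wordDist (h : x⁻¹ * y ∈ Submonoid.closure S) :
    ∃ l : List G, (∀ a ∈ l, a ∈ S) ∧ l.prod = x⁻¹ * y ∧ l.length = wordDist S x y := by
  obtain ⟨l, hl, hprod⟩ := Submonoid.exists_list_of_mem_closure h
  exact Nat.sInf_mem
    (s := {n | ∃ l : List G, (∀ a ∈ l, a ∈ S) ∧ l.prod = x⁻¹ * y ∧ l.length = n})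
    ⟨l.length, l, hl, hprod, rfl⟩

theorem list_prod_mem_closure {l : List G} (hl : ∀ a ∈ l, a ∈ S) :
    l.prod ∈ Submonoid.closure S :=
  Submonoid.list_prod_mem _ fun a ha => Submonoid.subset_closure (hl a ha)

theorem mem_closure_of_wordDist_ne_zero (h : wordDist S x y ≠ 0) :
    x⁻¹ * y ∈ Submonoid.closure S := by
  by_contra hxy
  refine h (Nat.sInf_eq_zero.2 (Or.inr (Set.eq_empty_of_forall_notMem ?_)))
  rintro n ⟨l, hl, hprod, -⟩
  exact hxy (hprod ▸ list_prod_mem_closure hl)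

theorem wordDist_self : wordDist S x x = 0 := by
  simpa using wordDist_le_length (S := S) (x := x) (y := x) (l := []) (by simp) (by simp)

theorem eq_of_wordDist_eq_zero (hxy : x⁻¹ * y ∈ Submonoid.closure S) (h : wordDist S x y = 0) :
    x = y := by
  obtain ⟨l, -, hprod, hlen⟩ := exists_list_length_eq_wordDist hxy
  rw [h, List.length_eq_zero_iff] at hlen
  subst hlen
  exact inv_mul_eq_one.1 hprod.symm

theorem wordDist_mul_left (g : G) : wordDist S (g * x) (g * y) = wordDist S x y := by
  simp only [wordDist, mul_inv_rev, mul_assoc, inv_mul_cancel_left]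

theorem wordDist_triangle (hxy : x⁻¹ * y ∈ Submonoid.closure S)
    (hyz : y⁻¹ * z ∈ Submonoid.closure S) :
    wordDist S x z ≤ wordDist S x y + wordDist S y z := by
  obtain ⟨l₁, hl₁, hprod₁, hlen₁⟩ := exists_list_length_eq_wordDist hxy
  obtain ⟨l₂, hl₂, hprod₂, hlen₂⟩ := exists_list_length_eq_wordDist hyz
  calc wordDist S x z ≤ (l₁ ++ l₂).length :=
        wordDist_le_length (by simpa [or_imp, forall_and] using And.intro hl₁ hl₂)
          (by simp [hprod₁, hprod₂, mul_assoc])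
    _ = _ := by rw [List.length_append, hlen₁, hlen₂]

theorem wordDist_comm (hsym : ∀ s ∈ S, s⁻¹ ∈ S) : wordDist S x y = wordDist S y x := by
  unfold wordDist
  congr 1
  ext n
  constructor <;>
  · rintro ⟨l, hl, hprod, rfl⟩
    refine ⟨(l.map (·⁻¹)).reverse, by simpa using fun a ha => inv_inv a ▸ hsym _ (hl _ ha), ?_,
      by simp⟩
    rw [← List.prod_inv_reverse, hprod, mul_inv_rev, inv_inv]

theorem wordDist_le_of_subset (hTS : T ⊆ S) (h : x⁻¹ * y ∈ Submonoid.closure T) :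
    wordDist S x y ≤ wordDist T x y := by
  obtain ⟨l, hl, hprod, hlen⟩ := exists_list_length_eq_wordDist h
  exact hlen ▸ wordDist_le_length (fun a ha => hTS (hl a ha)) hprod

theorem wordDist_eq_one_of_subset (hTS : T ⊆ S) (h : wordDist T x y = 1) :
    wordDist S x y = 1 := by
  have hT := mem_closure_of_wordDist_ne_zero (h.trans_ne one_ne_zero)
  have hxy : x ≠ y := by rintro rfl; simp [wordDist_self] at h
  have hle := wordDist_le_of_subset hTS hT
  have hne := mt (eq_of_wordDist_eq_zero (Submonoid.closure_mono hTS hT)) hxy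
  omega

theorem finite_setOf_wordDist_one_le (hS : Submonoid.closure S = ⊤) (hfin : S.Finite) (n : ℕ) :
    {x | wordDist S 1 x ≤ n}.Finite := by
  have := hfin.to_subtype
  refine ((List.finite_length_le S n).image fun l => (l.map (↑)).prod).subset ?_
  intro x hx
  obtain ⟨l, hl, hprod, hlen⟩ :=
    exists_list_length_eq_wordDist (S := S) (x := 1) (y := x) (by simp [hS])
  lift l to List S using hl
  simp only [List.length_map] at hlen
  exact ⟨l, by simpa [hlen] using hx, by simpa using hprod⟩

theorem tendsto_wordDist_one_cofinite_atTop (hS : Submonoid.closure S = ⊤) (hfin : S.Finite) :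
    Tendsto (wordDist S 1) cofinite atTop :=
  tendsto_atTop.2 fun n => eventually_cofinite.2 <|
    (finite_setOf_wordDist_one_le hS hfin n).subset fun _ hx => le_of_lt (not_le.1 hx)

theorem wordDist_one_le_add (hS : Submonoid.closure S = ⊤) (x y : G) :
    wordDist S 1 y ≤ wordDist S 1 x + wordDist S x y :=
  wordDist_triangle (by simp [hS]) (by simp [hS])

theorem wordDist_le_add (hS : Submonoid.closure S = ⊤) (hsym : ∀ s ∈ S, s⁻¹ ∈ S) (x y : G) :
    wordDist S x y ≤ wordDist S 1 x + wordDist S 1 y :=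
  wordDist_comm hsym (x := x) ▸ wordDist_triangle (by simp [hS]) (by simp [hS])

theorem inv_prod_take_mul_prod_take (l : List G) {u v : ℕ} (h : u ≤ v) :
    (l.take u).prod⁻¹ * (l.take v).prod = ((l.take v).drop u).prod := by
  rw [inv_mul_eq_iff_eq_mul, ← List.prod_take_mul_prod_drop (l.take v) u, List.take_take,
    min_eq_left h]

def IsGeodesicOn (S : Set G) (w : ℤ → G) (I : Set ℤ) : Prop :=
  ∀ i ∈ I, ∀ j ∈ I, i ≤ j → (wordDist S (w i) (w j) : ℤ) = j - i

theorem exists_isGeodesicOn (h : x⁻¹ * y ∈ Submonoid.closure S) :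
    ∃ w : ℤ → G, w 0 = x ∧ w (wordDist S x y) = y ∧
      IsGeodesicOn S w (Icc 0 (wordDist S x y)) ∧ ∀ i, x⁻¹ * w i ∈ Submonoid.closure S := by
  obtain ⟨l, hl, hprod, hlen⟩ := exists_list_length_eq_wordDist h
  set p : ℕ → G := fun u => x * (l.take u).prod
  have hslice : ∀ {u v : ℕ}, u ≤ v →
      (p u)⁻¹ * p v ∈ Submonoid.closure S ∧ wordDist S (p u) (p v) ≤ v - u := by
    intro u v huv
    have hsub : ∀ a ∈ (l.take v).drop u, a ∈ S :=
      fun a ha => hl a (List.mem_of_mem_take (List.mem_of_mem_drop ha))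
    have hp : (p u)⁻¹ * p v = ((l.take v).drop u).prod := by
      simp only [p, mul_inv_rev, mul_assoc, inv_mul_cancel_left, inv_prod_take_mul_prod_take l huv]
    refine ⟨hp ▸ list_prod_mem_closure hsub, (wordDist_le_length hsub hp.symm).trans ?_⟩
    simp only [List.length_drop, List.length_take]
    omega
  have hp0 : p 0 = x := by simp [p]
  have hpL : p (wordDist S x y) = y := by simp [p, ← hlen, hprod]
  refine ⟨fun i => p i.toNat, hp0, by simpa using hpL, ?_, fun i => by
    simpa [p] using list_prod_mem_closure fun a ha => hl a (List.mem_of_mem_take ha)⟩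
  intro i hi j hj hij
  obtain ⟨u, rfl⟩ := Int.eq_ofNat_of_zero_le hi.1
  obtain ⟨v, rfl⟩ := Int.eq_ofNat_of_zero_le hj.1
  simp only [Int.toNat_natCast]
  have huv : u ≤ v := by omega
  have hvL : v ≤ wordDist S x y := by simpa using hj.2
  have h₁ := hslice (Nat.zero_le u)
  have h₂ := hslice huv
  have h₃ := hslice hvL
  rw [hp0] at h₁
  rw [hpL] at h₃
  have h₂₃ : (p u)⁻¹ * y ∈ Submonoid.closure S := by
    simpa [mul_assoc] using Submonoid.mul_mem _ h₂.1 h₃.1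
  have := wordDist_triangle h₁.1 h₂₃
  have := wordDist_triangle h₂.1 h₃.1
  omega

theorem IsGeodesicOn.wordDist_add_one (hw : IsGeodesicOn S w I) {i : ℤ} (hi : i ∈ I)
    (hi' : i + 1 ∈ I) : wordDist S (w i) (w (i + 1)) = 1 := by
  have := hw i hi (i + 1) hi' (by omega)
  omega

theorem floydLength_nonneg (S : Set G) : ∀ l : List G, 0 ≤ floydLength S l
  | [] => le_rfl
  | [_] => le_rfl
  | _ :: b :: l =>
    add_nonneg (by unfold floydEdgeWeight; positivity) (floydLength_nonneg S (b :: l))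

theorem floydDist_le_floydEdgeWeight (h : wordDist S x y = 1) :
    floydDist S x y ≤ floydEdgeWeight S x y := by
  refine csInf_le ⟨0, ?_⟩ ⟨[x, y], ⟨rfl, rfl, List.isChain_pair.2 h⟩, by simp [floydLength]⟩
  rintro r ⟨l, -, rfl⟩
  exact floydLength_nonneg S l

theorem dist_le_sum_floydEdgeWeight (hdist : ∀ x y, dist (ι x) (ι y) = floydDist S x y)
    {v : ℕ → G} {K : ℕ} (hv : ∀ k < K, wordDist S (v k) (v (k + 1)) = 1) :
    dist (ι (v 0)) (ι (v K)) ≤ ∑ k ∈ Finset.range K, floydEdgeWeight S (v k) (v (k + 1)) := by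
  induction K with
  | zero => simp
  | succ K ih =>
    rw [Finset.sum_range_succ]
    calc _ ≤ dist (ι (v 0)) (ι (v K)) + dist (ι (v K)) (ι (v (K + 1))) := dist_triangle _ _ _
      _ ≤ _ := add_le_add (ih fun k hk => hv k (by omega))
          (hdist _ _ ▸ floydDist_le_floydEdgeWeight (hv K (by omega)))

theorem floydEdgeWeight_le_inv_sq {r : ℝ} (hr : 0 < r) (hx : r ≤ max 1 (wordDist S 1 x : ℝ))
    (hy : r ≤ max 1 (wordDist S 1 y : ℝ)) : floydEdgeWeight S x y ≤ r⁻¹ ^ 2 := by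
  have : r ≤ ((max 1 (min (wordDist S 1 x) (wordDist S 1 y)) : ℕ) : ℝ) := by
    push_cast
    rw [max_min_distrib_left]
    exact le_min hx hy
  unfold floydEdgeWeight
  gcongr

theorem sum_range_inv_add_sq_le {A : ℝ} (hA : 1 ≤ A) (K : ℕ) :
    ∑ k ∈ Finset.range K, (A + k)⁻¹ ^ 2 ≤ 2 / A := by
  set f : ℕ → ℝ := fun k => (A + k)⁻¹
  have key : ∀ k : ℕ, (A + k)⁻¹ ^ 2 ≤ 2 * (f k - f (k + 1)) := by
    intro k
    have hx : 1 ≤ A + k := by linarith [(Nat.cast_nonneg k : (0 : ℝ) ≤ k)]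
    simp only [f, Nat.cast_succ, ← add_assoc]
    rw [inv_sub_inv (by linarith) (by linarith), inv_pow, ← one_div, mul_div_assoc',
      div_le_div_iff₀ (by positivity) (by positivity)]
    nlinarith
  calc ∑ k ∈ Finset.range K, (A + k)⁻¹ ^ 2 ≤ ∑ k ∈ Finset.range K, 2 * (f k - f (k + 1)) :=
        Finset.sum_le_sum fun k _ => key k
    _ = 2 * (f 0 - f K) := by rw [← Finset.mul_sum, Finset.sum_range_sub']
    _ ≤ 2 / A := by
        have : 0 ≤ f K := by simp only [f]; positivity
        simp only [f, Nat.cast_zero, add_zero]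
        rw [div_eq_mul_inv]
        linarith

theorem dist_le_of_linear_growth (hdist : ∀ x y, dist (ι x) (ι y) = floydDist S x y)
    {v : ℕ → G} {K : ℕ} (hv : ∀ k < K, wordDist S (v k) (v (k + 1)) = 1) {A C : ℝ}
    (hA : 1 ≤ A) (hC : 0 < C) (hlev : ∀ k ≤ K, A + k ≤ C * max 1 (wordDist S 1 (v k) : ℝ)) :
    dist (ι (v 0)) (ι (v K)) ≤ 2 * C ^ 2 / A := by
  have hweight : ∀ k < K, floydEdgeWeight S (v k) (v (k + 1)) ≤ C ^ 2 * (A + k)⁻¹ ^ 2 := by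
    intro k hk
    have hpos : 0 < (A + k) / C := by positivity
    have hsucc : A + k ≤ C * max 1 (wordDist S 1 (v (k + 1)) : ℝ) :=
      (by push_cast; linarith : A + k ≤ A + (k + 1 : ℕ)).trans (hlev (k + 1) hk)
    refine (floydEdgeWeight_le_inv_sq hpos ((div_le_iff₀' hC).2 (hlev k hk.le))
      ((div_le_iff₀' hC).2 hsucc)).trans_eq ?_
    rw [inv_div, div_pow, div_eq_mul_inv, inv_pow]
  calc dist (ι (v 0)) (ι (v K))
      ≤ ∑ k ∈ Finset.range K, floydEdgeWeight S (v k) (v (k + 1)) :=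
        dist_le_sum_floydEdgeWeight hdist hv
    _ ≤ ∑ k ∈ Finset.range K, C ^ 2 * (A + k)⁻¹ ^ 2 :=
        Finset.sum_le_sum fun k hk => hweight k (Finset.mem_range.1 hk)
    _ ≤ C ^ 2 * (2 / A) := by
        rw [← Finset.mul_sum]
        gcongr
        exact sum_range_inv_add_sq_le hA K
    _ = 2 * C ^ 2 / A := by ring

theorem dist_le_of_wordDist_le (hS : Submonoid.closure S = ⊤)
    (hdist : ∀ x y, dist (ι x) (ι y) = floydDist S x y) {K : ℕ} (h : wordDist S x y ≤ K) :
    dist (ι x) (ι y) ≤ K * (max 1 ((wordDist S 1 y : ℝ) - K))⁻¹ ^ 2 := by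
  obtain ⟨w, hw0, hwk, hw, -⟩ := exists_isGeodesicOn (S := S) (x := x) (y := y) (by simp [hS])
  set k := wordDist S x y
  set r := max 1 ((wordDist S 1 y : ℝ) - K)
  have hr : 0 < r := one_pos.trans_le (le_max_left _ _)
  have hmem : ∀ i : ℕ, i ≤ k → (i : ℤ) ∈ Icc 0 (k : ℤ) := fun i hi => ⟨by positivity, by omega⟩
  have hlev : ∀ i : ℕ, i ≤ k → r ≤ max 1 (wordDist S 1 (w i) : ℝ) := by
    intro i hi
    have h₁ := wordDist_one_le_add hS (w i) y
    have h₂ := hw i (hmem i hi) k (hmem k le_rfl) (by omega)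
    rw [hwk] at h₂
    have h₃ : (wordDist S 1 y : ℝ) ≤ wordDist S 1 (w i) + K := by
      exact_mod_cast (show wordDist S 1 y ≤ wordDist S 1 (w i) + K by omega)
    exact max_le_max le_rfl (by linarith)
  calc dist (ι x) (ι y) = dist (ι (w ((0 : ℕ) : ℤ))) (ι (w ((k : ℕ) : ℤ))) := by
        rw [Nat.cast_zero, hw0, hwk]
    _ ≤ ∑ i ∈ Finset.range k, floydEdgeWeight S (w i) (w ((i + 1 : ℕ) : ℤ)) :=
        dist_le_sum_floydEdgeWeight (v := fun i : ℕ => w i) hdist fun i hi => by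
          simpa using hw.wordDist_add_one (hmem i hi.le) (by simpa using hmem (i + 1) hi)
    _ ≤ ∑ _i ∈ Finset.range k, r⁻¹ ^ 2 := Finset.sum_le_sum fun i hi =>
        floydEdgeWeight_le_inv_sq hr (hlev i (Finset.mem_range.1 hi).le)
          (hlev (i + 1) (Finset.mem_range.1 hi))
    _ ≤ K * r⁻¹ ^ 2 := by
        rw [Finset.sum_const, Finset.card_range, nsmul_eq_mul]
        gcongr

theorem eventually_dist_lt_of_wordDist_le (hS : Submonoid.closure S = ⊤)
    (hdist : ∀ x y, dist (ι x) (ι y) = floydDist S x y) {α : Type*} {l : Filter α} {y : α → G}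
    (hy : Tendsto (fun n => wordDist S 1 (y n)) l atTop) (K : ℕ) {δ : ℝ} (hδ : 0 < δ) :
    ∀ᶠ n in l, ∀ x, wordDist S x (y n) ≤ K → dist (ι x) (ι (y n)) < δ := by
  have hlim : Tendsto (fun n => (K : ℝ) * (max 1 ((wordDist S 1 (y n) : ℝ) - K))⁻¹ ^ 2) l
      (𝓝 0) := by
    have h₁ : Tendsto (fun n => max 1 ((wordDist S 1 (y n) : ℝ) - K)) l atTop :=
      tendsto_atTop_mono (fun n => le_max_right _ _)
        (tendsto_atTop_add_const_right _ _ (tendsto_natCast_atTop_atTop.comp hy))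
    simpa using (h₁.inv_tendsto_atTop.pow 2).const_mul (K : ℝ)
  filter_upwards [hlim.eventually_lt_const hδ] with n hn x hx
  exact (dist_le_of_wordDist_le hS hdist hx).trans_lt hn

structure IsQuasiGeodesicOn (S : Set G) (ε : ℝ) (w : ℤ → G) (I : Set ℤ) : Prop where
  wordDist_eq_one : ∀ i ∈ I, ∀ j ∈ I, |i - j| = 1 → wordDist S (w i) (w j) = 1
  le_wordDist : ∀ i ∈ I, ∀ j ∈ I, ε⁻¹ * ((|i - j| : ℤ) : ℝ) - ε ≤ wordDist S (w i) (w j)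

theorem IsQuasiGeodesicOn.mono {J : Set ℤ} (hw : IsQuasiGeodesicOn S ε w I) (hJ : J ⊆ I) :
    IsQuasiGeodesicOn S ε w J :=
  ⟨fun i hi j hj => hw.1 i (hJ hi) j (hJ hj), fun i hi j hj => hw.2 i (hJ hi) j (hJ hj)⟩

theorem IsQuasiGeodesicOn.comp_neg (hw : IsQuasiGeodesicOn S ε w I) :
    IsQuasiGeodesicOn S ε (fun i => w (-i)) (-I) := by
  have habs : ∀ i j : ℤ, |-i - -j| = |i - j| := fun i j => by rw [neg_sub_neg, abs_sub_comm]
  exact ⟨fun i hi j hj h => hw.1 _ hi _ hj (habs i j ▸ h),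
    fun i hi j hj => habs i j ▸ hw.2 _ hi _ hj⟩

theorem IsGeodesicOn.isQuasiGeodesicOn (hsym : ∀ s ∈ S, s⁻¹ ∈ S) (hTS : T ⊆ S)
    (hlow : ∀ x ∈ H, ∀ y ∈ H, ε⁻¹ * (wordDist T x y : ℝ) - ε ≤ wordDist S x y)
    (hw : IsGeodesicOn T w I) (hH : ∀ i, w i ∈ H) : IsQuasiGeodesicOn S ε w I := by
  have hT : ∀ i ∈ I, ∀ j ∈ I, i ≤ j → (wordDist T (w i) (w j) : ℤ) = |i - j| := by
    intro i hi j hj hij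
    rw [hw i hi j hj hij, abs_sub_comm, abs_of_nonneg (by omega)]
  have hle : ∀ i ∈ I, ∀ j ∈ I, i ≤ j → (|i - j| = 1 → wordDist S (w i) (w j) = 1) ∧
      ε⁻¹ * ((|i - j| : ℤ) : ℝ) - ε ≤ wordDist S (w i) (w j) := by
    intro i hi j hj hij
    have h := hT i hi j hj hij
    refine ⟨fun h1 => wordDist_eq_one_of_subset hTS (by omega), ?_⟩
    rw [← h]
    exact_mod_cast hlow _ (hH i) _ (hH j)
  have hcomm : ∀ i j, wordDist S (w i) (w j) = wordDist S (w j) (w i) :=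
    fun i j => wordDist_comm hsym
  constructor <;> intro i hi j hj <;> rcases le_total i j with hij | hij
  · exact (hle i hi j hj hij).1
  · rw [hcomm, abs_sub_comm]; exact (hle j hj i hi hij).1
  · exact (hle i hi j hj hij).2
  · rw [hcomm, abs_sub_comm]; exact (hle j hj i hi hij).2

theorem IsGeodesicOn.wordDist_one_le (hS : Submonoid.closure S = ⊤) (hsym : ∀ s ∈ S, s⁻¹ ∈ S)
    (hup : ∀ x ∈ H, ∀ y ∈ H, (wordDist S x y : ℝ) ≤ ε * wordDist T x y + ε)
    (hw : IsGeodesicOn T w I) (hH : ∀ i, w i ∈ H) (h0 : 0 ∈ I) {i : ℤ} (hi : i ∈ I) :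
    (wordDist S 1 (w i) : ℝ) ≤ wordDist S 1 (w 0) + ε * ((|i| : ℤ) : ℝ) + ε := by
  have h₁ : (wordDist S 1 (w i) : ℝ) ≤ wordDist S 1 (w 0) + wordDist S (w 0) (w i) := by
    exact_mod_cast wordDist_one_le_add hS (w 0) (w i)
  have h₂ : (wordDist S (w 0) (w i) : ℝ) ≤ ε * ((|i| : ℤ) : ℝ) + ε := by
    rcases le_total 0 i with h | h
    · have hT : ((wordDist T (w 0) (w i) : ℤ) : ℝ) = i := by
        exact_mod_cast (hw 0 h0 i hi h).trans (sub_zero i)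
      rw [abs_of_nonneg h, ← hT]
      exact_mod_cast hup _ (hH 0) _ (hH i)
    · have hT : ((wordDist T (w i) (w 0) : ℤ) : ℝ) = ((-i : ℤ) : ℝ) := by
        exact_mod_cast (hw i hi 0 h0 h).trans (zero_sub i)
      rw [wordDist_comm hsym, abs_of_nonpos h, ← hT]
      exact_mod_cast hup _ (hH i) _ (hH 0)
  linarith

theorem IsGeodesicOn.le_abs_of_lt_wordDist_one (hS : Submonoid.closure S = ⊤)
    (hsym : ∀ s ∈ S, s⁻¹ ∈ S) (hε : 0 < ε)
    (hup : ∀ x ∈ H, ∀ y ∈ H, (wordDist S x y : ℝ) ≤ ε * wordDist T x y + ε)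
    (hw : IsGeodesicOn T w I) (hH : ∀ i, w i ∈ H) (h0 : 0 ∈ I) {R : ℝ}
    (hR : (wordDist S 1 (w 0) : ℝ) ≤ R) {K : ℕ} {i : ℤ} (hi : i ∈ I)
    (hK : R + ε * K + ε < wordDist S 1 (w i)) : (K : ℤ) ≤ |i| := by
  by_contra hlt
  have : ε * ((|i| : ℤ) : ℝ) < ε * K :=
    mul_lt_mul_of_pos_left (by exact_mod_cast not_le.1 hlt) hε
  linarith [hw.wordDist_one_le hS hsym hup hH h0 hi]

theorem IsQuasiGeodesicOn.sub_lt (hε : 0 < ε) (hw : IsQuasiGeodesicOn S ε w I) {i j : ℤ}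
    (hi : i ∈ I) (hj : j ∈ I) :
    ((j - i : ℤ) : ℝ) < (ε ^ 2 + ε + 1) * wordDist S (w i) (w j) + (ε ^ 2 + ε + 1) := by
  have h₁ := mul_le_mul_of_nonneg_left (hw.le_wordDist i hi j hj) hε.le
  rw [mul_sub, ← mul_assoc, mul_inv_cancel₀ hε.ne', one_mul] at h₁
  have h₂ : ((j - i : ℤ) : ℝ) ≤ ((|i - j| : ℤ) : ℝ) := by
    exact_mod_cast (le_abs_self (j - i)).trans_eq (abs_sub_comm j i)
  have h₃ : (0 : ℝ) ≤ wordDist S (w i) (w j) := Nat.cast_nonneg _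
  nlinarith

theorem IsQuasiGeodesicOn.abs_le (hS : Submonoid.closure S = ⊤) (hsym : ∀ s ∈ S, s⁻¹ ∈ S)
    (hε : 0 < ε) (hw : IsQuasiGeodesicOn S ε w I) (h0 : 0 ∈ I) {i : ℤ} (hi : i ∈ I) :
    ((|i| : ℤ) : ℝ) ≤ ε * (wordDist S 1 (w 0) + wordDist S 1 (w i)) + ε ^ 2 := by
  have h₁ := hw.le_wordDist 0 h0 i hi
  have h₂ : (wordDist S (w 0) (w i) : ℝ) ≤ wordDist S 1 (w 0) + wordDist S 1 (w i) := by
    exact_mod_cast wordDist_le_add hS hsym _ _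
  rw [zero_sub, abs_neg] at h₁
  have h₃ := mul_le_mul_of_nonneg_left (h₁.trans h₂) hε.le
  rw [mul_sub, ← mul_assoc, mul_inv_cancel₀ hε.ne', one_mul] at h₃
  nlinarith

theorem IsQuasiGeodesicOn.dist_tail_le (hS : Submonoid.closure S = ⊤)
    (hsym : ∀ s ∈ S, s⁻¹ ∈ S) (hdist : ∀ x y, dist (ι x) (ι y) = floydDist S x y) (hε : 1 ≤ ε)
    {N : ℕ} (hw : IsQuasiGeodesicOn S ε w (Icc 0 N)) {R : ℝ}
    (hR : (wordDist S 1 (w 0) : ℝ) ≤ R) {n : ℕ} (hn : 2 * ε * (ε + R) ≤ n) (hn₁ : 1 ≤ n)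
    (hnN : n ≤ N) : dist (ι (w n)) (ι (w N)) ≤ 8 * ε ^ 2 / n := by
  have hmem : ∀ k : ℕ, k ≤ N - n → ((n + k : ℕ) : ℤ) ∈ Icc (0 : ℤ) N :=
    fun k hk => ⟨by positivity, by omega⟩
  have hstep : ∀ k < N - n, wordDist S (w ((n + k : ℕ) : ℤ)) (w ((n + (k + 1) : ℕ) : ℤ)) = 1 :=
    fun k hk => hw.wordDist_eq_one _ (hmem k hk.le) _ (hmem (k + 1) hk) (by push_cast; simp)
  have hlev : ∀ k ≤ N - n,
      (n : ℝ) + k ≤ 2 * ε * max 1 (wordDist S 1 (w ((n + k : ℕ) : ℤ)) : ℝ) := by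
    intro k hk
    have h := hw.abs_le hS hsym (by linarith) ⟨le_rfl, by positivity⟩ (hmem k hk)
    rw [abs_of_nonneg (by positivity)] at h
    have h₁ := mul_le_mul_of_nonneg_left
      (le_max_right 1 (wordDist S 1 (w ((n + k : ℕ) : ℤ)) : ℝ)) (by linarith : (0 : ℝ) ≤ ε)
    have h₂ := mul_le_mul_of_nonneg_left hR (by linarith : (0 : ℝ) ≤ ε)
    push_cast at h h₁ ⊢
    nlinarith
  have h := dist_le_of_linear_growth (v := fun k : ℕ => w ((n + k : ℕ) : ℤ)) hdist hstep
    (by exact_mod_cast hn₁) (by positivity) hlev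
  simp only [add_zero, Nat.add_sub_cancel' hnN] at h
  convert h using 1
  ring

theorem IsQuasiGeodesicOn.dist_zero_le_of_isMinOn (hS : Submonoid.closure S = ⊤)
    (hsym : ∀ s ∈ S, s⁻¹ ∈ S) (hdist : ∀ x y, dist (ι x) (ι y) = floydDist S x y) (hε : 1 ≤ ε)
    {N : ℕ} (hw : IsQuasiGeodesicOn S ε w (Icc 0 N))
    (hmin : IsMinOn (fun i => wordDist S 1 (w i)) (Icc 0 N) 0) :
    dist (ι (w 0)) (ι (w N)) ≤ 32 * ε ^ 3 / max 1 (wordDist S 1 (w 0) : ℝ) := by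
  set D := max 1 (wordDist S 1 (w 0) : ℝ)
  have hmem : ∀ k : ℕ, k ≤ N → (k : ℤ) ∈ Icc (0 : ℤ) N := fun k hk => ⟨by positivity, by omega⟩
  have hstep : ∀ k < N, wordDist S (w (k : ℕ)) (w ((k + 1 : ℕ) : ℤ)) = 1 :=
    fun k hk => hw.wordDist_eq_one _ (hmem k hk.le) _ (hmem (k + 1) hk) (by push_cast; simp)
  have hlev : ∀ k ≤ N, ε * D + k ≤ 4 * ε ^ 2 * max 1 (wordDist S 1 (w k) : ℝ) := by
    intro k hk
    set M := max 1 (wordDist S 1 (w k) : ℝ)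
    have h := hw.abs_le hS hsym (by linarith) ⟨le_rfl, by positivity⟩ (hmem k hk)
    rw [abs_of_nonneg (by positivity)] at h
    have hDM : D ≤ M := max_le_max le_rfl (by exact_mod_cast hmin (hmem k hk))
    have hD₁ : 1 ≤ D := le_max_left _ _
    have hD : (wordDist S 1 (w 0) : ℝ) ≤ D := le_max_right _ _
    have hM : (wordDist S 1 (w k) : ℝ) ≤ M := le_max_right _ _
    have hε₀ : (0 : ℝ) ≤ ε := by linarith
    push_cast at h
    nlinarith [mul_le_mul_of_nonneg_left hDM hε₀, mul_le_mul_of_nonneg_left hD hε₀,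
      mul_le_mul_of_nonneg_left hM hε₀, mul_le_mul_of_nonneg_left (hD₁.trans hDM) (sq_nonneg ε),
      mul_le_mul_of_nonneg_left (hD₁.trans hDM) (mul_nonneg hε₀ (sub_nonneg.2 hε))]
  have h := dist_le_of_linear_growth (v := fun k : ℕ => w k) hdist hstep
    (by nlinarith [le_max_left 1 (wordDist S 1 (w 0) : ℝ)]) (by positivity) hlev
  simp only [Nat.cast_zero] at h
  refine h.trans_eq ?_
  field_simp
  ring

theorem IsQuasiGeodesicOn.dist_le_of_isMinOn (hS : Submonoid.closure S = ⊤)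
    (hsym : ∀ s ∈ S, s⁻¹ ∈ S) (hdist : ∀ x y, dist (ι x) (ι y) = floydDist S x y) (hε : 1 ≤ ε)
    {M N : ℕ} (hw : IsQuasiGeodesicOn S ε w (Icc (-M) N))
    (hmin : IsMinOn (fun i => wordDist S 1 (w i)) (Icc (-M) N) 0) :
    dist (ι (w (-M))) (ι (w N)) ≤ 64 * ε ^ 3 / max 1 (wordDist S 1 (w 0) : ℝ) := by
  have hback := (hw.comp_neg.mono ?_).dist_zero_le_of_isMinOn hS hsym hdist hε
    (N := M) (fun i hi => by simpa using hmin (show -i ∈ Icc (-(M : ℤ)) N by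
      simp only [Set.mem_Icc] at hi ⊢; omega))
  · have hfwd := (hw.mono (Icc_subset_Icc (by omega) le_rfl)).dist_zero_le_of_isMinOn hS hsym
      hdist hε (N := N) fun i hi => hmin (Icc_subset_Icc (by omega) le_rfl hi)
    simp only [neg_zero] at hback
    calc dist (ι (w (-M))) (ι (w N)) ≤ dist (ι (w 0)) (ι (w (-M))) + dist (ι (w 0)) (ι (w N)) :=
          dist_triangle_left _ _ _
      _ ≤ _ := (add_le_add hback hfwd).trans_eq (by ring)
  · rw [Set.neg_Icc, neg_neg]
    exact Icc_subset_Icc (by omega) le_rfl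

theorem exists_seq_tendsto_of_mem_floydLimitSet (hS : Submonoid.closure S = ⊤) (hfin : S.Finite)
    (hdist : ∀ x y, dist (ι x) (ι y) = floydDist S x y) {p : 𝔾} (hp : p ∈ floydLimitSet ι H) :
    ∃ a : ℕ → G, (∀ n, a n ∈ H) ∧ Tendsto (ι ∘ a) atTop (𝓝 p) ∧
      Tendsto (fun n => wordDist S 1 (a n)) atTop atTop := by
  obtain ⟨g, hg⟩ := hp
  obtain ⟨z, hz, hzp⟩ := mem_closure_iff_seq_limit.1 hg
  choose a haH haz using fun n => (hz n).1
  have hne : ∀ n, ι (a n * g) ≠ p := fun n => by simpa [haz n] using (hz n).2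
  have hlim : Tendsto (fun n => ι (a n * g)) atTop (𝓝 p) := by simpa [haz] using hzp
  have hcof : Tendsto (fun n => a n * g) atTop cofinite := by
    refine le_cofinite_iff_eventually_ne.2 fun v => eventually_map.2 ?_
    by_cases hv : ι v = p
    · exact Eventually.of_forall fun n h => hne n (h ▸ hv)
    · exact (hlim.eventually_ne (Ne.symm hv)).mono fun n h h' => h (h' ▸ rfl)
  have hlev := (tendsto_wordDist_one_cofinite_atTop hS hfin).comp hcof
  have hdg : ∀ n, wordDist S (a n) (a n * g) = wordDist S 1 g := fun n => by
    simpa using wordDist_mul_left (S := S) (a n) (x := 1) (y := g)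
  refine ⟨a, haH, hlim.congr_dist ?_, ?_⟩
  · refine Metric.tendsto_nhds.2 fun δ hδ => ?_
    filter_upwards [eventually_dist_lt_of_wordDist_le hS hdist hlev _ hδ] with n hn
    rw [Real.dist_0_eq_abs, abs_of_nonneg dist_nonneg, dist_comm]
    exact hn (a n) (hdg n).le
  · refine tendsto_atTop.2 fun B => (tendsto_atTop.1 hlev (B + wordDist S 1 g)).mono fun n hn => ?_
    have := wordDist_one_le_add hS (a n) (a n * g)
    simp only [Function.comp_apply, hdg] at this hn
    omega

theorem exists_isGeodesicOn_of_le_dist (hS : Submonoid.closure S = ⊤)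
    (hsym : ∀ s ∈ S, s⁻¹ ∈ S) (hdist : ∀ x y, dist (ι x) (ι y) = floydDist S x y)
    (hTS : T ⊆ S) (hTH : T ⊆ H) (hε : 1 ≤ ε)
    (hlow : ∀ x ∈ H, ∀ y ∈ H, ε⁻¹ * (wordDist T x y : ℝ) - ε ≤ wordDist S x y)
    {a b : G} (ha : a ∈ H) (hab : a⁻¹ * b ∈ Submonoid.closure T) {r : ℝ} (hr : 0 < r)
    (hrab : r ≤ dist (ι a) (ι b)) :
    ∃ w : ℤ → G, ∃ m n : ℕ, w (-m) = a ∧ w n = b ∧ IsGeodesicOn T w (Icc (-m) n) ∧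
      (∀ i, w i ∈ H) ∧ (wordDist S 1 (w 0) : ℝ) ≤ 64 * ε ^ 3 / r := by
  obtain ⟨W, hW0, hWL, hW, hWT⟩ := exists_isGeodesicOn hab
  set L := wordDist T a b
  obtain ⟨i₀, hi₀, hmin⟩ := (Finset.range (L + 1)).exists_min_image
    (fun i : ℕ => wordDist S 1 (W i)) ⟨0, by simp⟩
  rw [Finset.mem_range] at hi₀
  have hWH : ∀ i, W i ∈ H := fun i => by
    simpa using H.mul_mem ha ((Submonoid.closure_le (S := H.toSubmonoid)).2 hTH (hWT i))
  set w : ℤ → G := fun i => W (i + i₀)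
  have hw : IsGeodesicOn T w (Icc (-i₀) (L - i₀ : ℕ)) := by
    rintro i ⟨hi₁, hi₂⟩ j ⟨hj₁, hj₂⟩ hij
    have := hW (i + i₀) ⟨by omega, by omega⟩ (j + i₀) ⟨by omega, by omega⟩ (by omega)
    simp only [w]
    omega
  have hwH : ∀ i, w i ∈ H := fun i => hWH _
  have hwmin : IsMinOn (fun i => wordDist S 1 (w i)) (Icc (-i₀) (L - i₀ : ℕ)) 0 := by
    refine isMinOn_iff.2 fun i ⟨hi₁, hi₂⟩ => ?_
    have := hmin (i + i₀).toNat (Finset.mem_range.2 (by omega))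
    rw [Int.toNat_of_nonneg (by omega)] at this
    simpa [w] using this
  have hwa : w (-i₀) = a := by simp [w, hW0]
  have hwb : w (L - i₀ : ℕ) = b := by
    simp only [w]
    rw [← hWL]
    congr 1
    omega
  have hwab := (hw.isQuasiGeodesicOn hsym hTS hlow hwH).dist_le_of_isMinOn hS hsym hdist hε hwmin
  rw [hwa, hwb] at hwab
  refine ⟨w, i₀, L - i₀, hwa, hwb, hw, hwH, (le_max_right 1 _).trans ?_⟩
  rw [le_div_iff₀ hr, mul_comm]
  exact (le_div_iff₀ (one_pos.trans_le (le_max_left _ _))).1 (hrab.trans hwab)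

theorem tendsto_of_isQuasiGeodesicOn_Icc (hS : Submonoid.closure S = ⊤)
    (hsym : ∀ s ∈ S, s⁻¹ ∈ S) (hdist : ∀ x y, dist (ι x) (ι y) = floydDist S x y) (hε : 1 ≤ ε)
    {α : Type*} {l : Filter α} [l.NeBot] {w : α → ℤ → G} {n : α → ℕ} {γ : ℤ → G} {R : ℝ}
    {q : 𝔾} (hw : ∀ᶠ j in l, IsQuasiGeodesicOn S ε (w j) (Icc 0 (n j)) ∧
      (wordDist S 1 (w j 0) : ℝ) ≤ R)
    (hγ : ∀ k : ℕ, ∀ᶠ j in l, k ≤ n j ∧ w j k = γ k)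
    (hq : Tendsto (fun j => ι (w j (n j))) l (𝓝 q)) :
    Tendsto (fun k : ℕ => ι (γ k)) atTop (𝓝 q) := by
  have hbound : ∀ᶠ k : ℕ in atTop, dist (ι (γ k)) q ≤ 8 * ε ^ 2 / k := by
    filter_upwards [eventually_ge_atTop 1, eventually_ge_atTop ⌈2 * ε * (ε + R)⌉₊] with k hk hkR
    refine le_of_tendsto (tendsto_const_nhds.dist hq) ?_
    filter_upwards [hw, hγ k] with j ⟨hwj, hRj⟩ ⟨hkn, hjk⟩
    rw [← hjk]
    exact hwj.dist_tail_le hS hsym hdist hε hRj (Nat.ceil_le.1 hkR) hk hkn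
  exact tendsto_iff_dist_tendsto_zero.2 <| squeeze_zero' (Eventually.of_forall fun _ => dist_nonneg)
    hbound (tendsto_const_div_atTop_nhds_zero_nat _)

theorem tendsto_ends_of_isQuasiGeodesicOn_Icc (hS : Submonoid.closure S = ⊤)
    (hsym : ∀ s ∈ S, s⁻¹ ∈ S) (hdist : ∀ x y, dist (ι x) (ι y) = floydDist S x y) (hε : 1 ≤ ε)
    {α : Type*} {l : Filter α} [l.NeBot] {w : α → ℤ → G} {m n : α → ℕ} {γ : ℤ → G} {R : ℝ}
    {p q : 𝔾} (hw : ∀ᶠ j in l, IsQuasiGeodesicOn S ε (w j) (Icc (-m j) (n j)) ∧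
      (wordDist S 1 (w j 0) : ℝ) ≤ R)
    (hγ : ∀ i : ℤ, ∀ᶠ j in l, i ∈ Icc (-(m j : ℤ)) (n j) ∧ w j i = γ i)
    (hp : Tendsto (fun j => ι (w j (-m j))) l (𝓝 p))
    (hq : Tendsto (fun j => ι (w j (n j))) l (𝓝 q)) :
    Tendsto (fun k : ℕ => ι (γ (-k))) atTop (𝓝 p) ∧ Tendsto (fun k : ℕ => ι (γ k)) atTop (𝓝 q) := by
  refine ⟨tendsto_of_isQuasiGeodesicOn_Icc hS hsym hdist hε (w := fun j i => w j (-i)) (n := m)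
      (γ := fun i => γ (-i)) (R := R) ?_ (fun k => ?_) hp,
    tendsto_of_isQuasiGeodesicOn_Icc hS hsym hdist hε (n := n) (R := R) ?_ (fun k => ?_) hq⟩
  · filter_upwards [hw] with j ⟨hwj, hR⟩
    refine ⟨hwj.comp_neg.mono ?_, by simpa using hR⟩
    rw [Set.neg_Icc, neg_neg]
    exact Icc_subset_Icc (by omega) le_rfl
  · filter_upwards [hγ (-k)] with j ⟨hk, hjk⟩
    exact ⟨by simpa using hk.1, hjk⟩
  · filter_upwards [hw] with j ⟨hwj, hR⟩
    exact ⟨hwj.mono (Icc_subset_Icc (by omega) le_rfl), hR⟩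
  · filter_upwards [hγ k] with j ⟨hk, hjk⟩
    exact ⟨by exact_mod_cast hk.2, hjk⟩

theorem eventually_exists_isGeodesicOn (hS : Submonoid.closure S = ⊤)
    (hsym : ∀ s ∈ S, s⁻¹ ∈ S) (hdist : ∀ x y, dist (ι x) (ι y) = floydDist S x y)
    (hTS : T ⊆ S) (hTH : T ⊆ H) (hε : 1 ≤ ε)
    (hlow : ∀ x ∈ H, ∀ y ∈ H, ε⁻¹ * (wordDist T x y : ℝ) - ε ≤ wordDist S x y)
    (hup : ∀ x ∈ H, ∀ y ∈ H, (wordDist S x y : ℝ) ≤ ε * wordDist T x y + ε)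
    {a b : ℕ → G} (haH : ∀ j, a j ∈ H) (hbH : ∀ j, b j ∈ H) {p q : 𝔾} (hpq : p ≠ q)
    (hap : Tendsto (ι ∘ a) atTop (𝓝 p)) (hbq : Tendsto (ι ∘ b) atTop (𝓝 q))
    (hb : Tendsto (fun j => wordDist S 1 (b j)) atTop atTop) :
    ∀ᶠ j in atTop, ∃ w : ℤ → G, ∃ m n : ℕ, w (-m) = a j ∧ w n = b j ∧
      IsGeodesicOn T w (Icc (-m) n) ∧ (∀ i, w i ∈ H) ∧
      (wordDist S 1 (w 0) : ℝ) ≤ 64 * ε ^ 3 / (dist p q / 2) := by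
  have hr : 0 < dist p q / 2 := half_pos (dist_pos.2 hpq)
  have hfar : ∀ᶠ j in atTop, dist p q / 2 < dist (ι (a j)) (ι (b j)) :=
    (hap.dist hbq).eventually (lt_mem_nhds (half_lt_self (dist_pos.2 hpq)))
  filter_upwards [hfar, eventually_dist_lt_of_wordDist_le hS hdist hb ⌈ε⌉₊ hr] with j hjfar hnear
  -- `T` need not generate `H` as a monoid. Without a `T`-word from `a j` to `b j` we would
  -- have `wordDist T (a j) (b j) = sInf ∅ = 0`, so undistortedness would put `b j` within `ε`
  -- of `a j`, too close for their Floyd distance to exceed `dist p q / 2`.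
  have hT : (a j)⁻¹ * b j ∈ Submonoid.closure T := by
    refine mem_closure_of_wordDist_ne_zero fun h0 => (hnear (a j) ?_).not_gt hjfar
    have := hup _ (haH j) _ (hbH j)
    rw [h0, Nat.cast_zero, mul_zero, zero_add] at this
    exact_mod_cast this.trans (Nat.le_ceil ε)
  exact exists_isGeodesicOn_of_le_dist hS hsym hdist hTS hTH hε hlow (haH j) hT hr hjfar.le

theorem exists_isGeodesicOn_univ_eventually_eq (hS : Submonoid.closure S = ⊤)
    (hsym : ∀ s ∈ S, s⁻¹ ∈ S) (hfin : S.Finite)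
    (hup : ∀ x ∈ H, ∀ y ∈ H, (wordDist S x y : ℝ) ≤ ε * wordDist T x y + ε)
    {α : Type*} (𝒰 : Ultrafilter α) {w : α → ℤ → G} {m n : α → ℕ} {R : ℝ}
    (hw : ∀ᶠ j in 𝒰, IsGeodesicOn T (w j) (Icc (-m j) (n j)) ∧ (∀ i, w j i ∈ H) ∧
      (wordDist S 1 (w j 0) : ℝ) ≤ R)
    (harms : ∀ K : ℕ, ∀ᶠ j in 𝒰, K ≤ m j ∧ K ≤ n j) :
    ∃ γ : ℤ → G, (∀ i, ∀ᶠ j in 𝒰, i ∈ Icc (-(m j : ℤ)) (n j) ∧ w j i = γ i) ∧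
      (∀ i, γ i ∈ H) ∧ IsGeodesicOn T γ univ := by
  have hin : ∀ i : ℤ, ∀ᶠ j in 𝒰, (IsGeodesicOn T (w j) (Icc (-m j) (n j)) ∧
      (∀ i, w j i ∈ H) ∧ (wordDist S 1 (w j 0) : ℝ) ≤ R) ∧ i ∈ Icc (-(m j : ℤ)) (n j) :=
    fun i => (hw.and (harms i.natAbs)).mono fun j ⟨hj, hm, hn⟩ => ⟨hj, by omega, by omega⟩
  obtain ⟨γ, hγ⟩ := 𝒰.exists_forall_eventually_eq (f := w) fun i =>
    ⟨_, finite_setOf_wordDist_one_le hS hfin ⌈R + ε * ((|i| : ℤ) : ℝ) + ε⌉₊,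
      (hin i).mono fun j ⟨⟨hgeo, hH, hR⟩, hi⟩ => by
        have := hgeo.wordDist_one_le hS hsym hup hH ⟨by omega, by omega⟩ hi
        exact_mod_cast (this.trans (by linarith)).trans (Nat.le_ceil _)⟩
  refine ⟨γ, fun i => ((hin i).and (hγ i)).mono fun j h => ⟨h.1.2, h.2⟩, fun i => ?_,
    fun i _ i' _ hii' => ?_⟩
  · obtain ⟨j, ⟨⟨-, hH, -⟩, -⟩, hji⟩ := ((hin i).and (hγ i)).exists
    exact hji ▸ hH i
  · obtain ⟨j, ⟨⟨⟨hgeo, -⟩, hi⟩, hji⟩, ⟨-, hi'⟩, hji'⟩ :=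
      (((hin i).and (hγ i)).and ((hin i').and (hγ i'))).exists
    rw [← hji, ← hji']
    exact hgeo i hi i' hi' hii'

theorem exists_isGeodesicOn_univ_tendsto (hS : Submonoid.closure S = ⊤)
    (hsym : ∀ s ∈ S, s⁻¹ ∈ S) (hfin : S.Finite)
    (hdist : ∀ x y, dist (ι x) (ι y) = floydDist S x y)
    (hTS : T ⊆ S) (hTH : T ⊆ H) (hε : 1 ≤ ε)
    (hlow : ∀ x ∈ H, ∀ y ∈ H, ε⁻¹ * (wordDist T x y : ℝ) - ε ≤ wordDist S x y)
    (hup : ∀ x ∈ H, ∀ y ∈ H, (wordDist S x y : ℝ) ≤ ε * wordDist T x y + ε)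
    {a b : ℕ → G} (haH : ∀ j, a j ∈ H) (hbH : ∀ j, b j ∈ H) {p q : 𝔾} (hpq : p ≠ q)
    (hap : Tendsto (ι ∘ a) atTop (𝓝 p)) (hbq : Tendsto (ι ∘ b) atTop (𝓝 q))
    (ha : Tendsto (fun j => wordDist S 1 (a j)) atTop atTop)
    (hb : Tendsto (fun j => wordDist S 1 (b j)) atTop atTop) :
    ∃ γ : ℤ → G, (∀ i, γ i ∈ H) ∧ IsGeodesicOn T γ univ ∧
      Tendsto (fun k : ℕ => ι (γ (-k))) atTop (𝓝 p) ∧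
      Tendsto (fun k : ℕ => ι (γ k)) atTop (𝓝 q) := by
  obtain ⟨N, hN⟩ := eventually_atTop.1 <| eventually_exists_isGeodesicOn hS hsym hdist hTS hTH
    hε hlow hup haH hbH hpq hap hbq hb
  choose! w m n hwa hwb hw hwH hwR using hN
  set R := 64 * ε ^ 3 / (dist p q / 2)
  set 𝒰 := Ultrafilter.of (atTop : Filter ℕ)
  have hU : ∀ {P : ℕ → Prop}, (∀ᶠ j in atTop, P j) → ∀ᶠ j in (𝒰 : Filter ℕ), P j :=
    fun h => h.filter_mono (Ultrafilter.of_le _)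
  have hN𝒰 : ∀ᶠ j in (𝒰 : Filter ℕ), N ≤ j := hU (eventually_ge_atTop N)
  have harms : ∀ K : ℕ, ∀ᶠ j in (𝒰 : Filter ℕ), K ≤ m j ∧ K ≤ n j := by
    intro K
    have hK := fun (c : ℕ → G) (hc : Tendsto (fun j => wordDist S 1 (c j)) atTop atTop) =>
      hU <| (tendsto_natCast_atTop_atTop.comp hc).eventually_gt_atTop (R + ε * K + ε)
    filter_upwards [hN𝒰, hK a ha, hK b hb] with j hj haj hbj
    have hle := fun i hi => (hw j hj).le_abs_of_lt_wordDist_one hS hsym (by linarith) hup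
      (hwH j hj) ⟨by omega, by omega⟩ (hwR j hj) (K := K) (i := i) hi
    exact ⟨by simpa using hle _ ⟨le_rfl, by omega⟩ (by simpa [hwa j hj] using haj),
      by simpa using hle _ ⟨by omega, le_rfl⟩ (by simpa [hwb j hj] using hbj)⟩
  obtain ⟨γ, hγ, hγH, hγT⟩ := exists_isGeodesicOn_univ_eventually_eq hS hsym hfin hup 𝒰
    (hN𝒰.mono fun j hj => ⟨hw j hj, hwH j hj, hwR j hj⟩) harms
  obtain ⟨hγp, hγq⟩ := tendsto_ends_of_isQuasiGeodesicOn_Icc hS hsym hdist hε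
    (hN𝒰.mono fun j hj => ⟨(hw j hj).isQuasiGeodesicOn hsym hTS hlow (hwH j hj), hwR j hj⟩) hγ
    ((hap.mono_left (Ultrafilter.of_le _)).congr' (hN𝒰.mono fun j hj => by simp [hwa j hj]))
    ((hbq.mono_left (Ultrafilter.of_le _)).congr' (hN𝒰.mono fun j hj => by simp [hwb j hj]))
  exact ⟨γ, hγH, hγT, hγp, hγq⟩

end

theorem quasigeodesics_in_subgroup_between_limit_points_general
    {G : Type*} [Group G] (S : Finset G)
    (hsym : ∀ s ∈ S, s⁻¹ ∈ S) (hgen : Subgroup.closure (S : Set G) = ⊤)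
    {𝔾 : Type*} [MetricSpace 𝔾]
    (ι : G → 𝔾)
    (hdist : ∀ x y : G, dist (ι x) (ι y) = floydDist (S : Set G) x y)
    (H : Subgroup G) (T : Finset G) (hTS : T ⊆ S) (hT : (T : Set G) ⊆ (H : Set G))
    (hund : IsUndistorted (S : Set G) (T : Set G) H) :
    ∃ ε₀ : ℝ, 0 ≤ ε₀ ∧
      ∀ p q : 𝔾, p ∈ floydLimitSet ι H → q ∈ floydLimitSet ι H → p ≠ q →
        ∃ γ : ℤ → G, (∀ n : ℤ, γ n ∈ H) ∧
          (∀ n : ℤ, wordDist (S : Set G) (γ n) (γ (n + 1)) = 1) ∧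
          (∀ m n : ℤ, m ≤ n →
            ((n - m : ℤ) : ℝ) < ε₀ * (wordDist (S : Set G) (γ m) (γ n) : ℝ) + ε₀) ∧
          Tendsto (fun k : ℕ => ι (γ (-(k : ℤ)))) atTop (nhds p) ∧
          Tendsto (fun k : ℕ => ι (γ (k : ℤ))) atTop (nhds q) := by
  obtain ⟨ε, hε, hund⟩ := hund
  have hlow := fun x hx y hy => (hund x hx y hy).1
  have hup := fun x hx y hy => (hund x hx y hy).2
  have hS := submonoid_closure_eq_top_of_inv_mem hsym hgen
  refine ⟨ε ^ 2 + ε + 1, by positivity, fun p q hp hq hpq => ?_⟩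
  obtain ⟨a, haH, hap, ha⟩ := exists_seq_tendsto_of_mem_floydLimitSet hS S.finite_toSet hdist hp
  obtain ⟨b, hbH, hbq, hb⟩ := exists_seq_tendsto_of_mem_floydLimitSet hS S.finite_toSet hdist hq
  obtain ⟨γ, hγH, hγ, hγp, hγq⟩ := exists_isGeodesicOn_univ_tendsto hS hsym S.finite_toSet hdist
    (Finset.coe_subset.2 hTS) hT hε hlow hup haH hbH hpq hap hbq ha hb
  have hqg := hγ.isQuasiGeodesicOn hsym (Finset.coe_subset.2 hTS) hlow hγH
  exact ⟨γ, hγH, fun n => hqg.wordDist_eq_one n trivial (n + 1) trivial (by simp),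
    fun m n _ => hqg.sub_lt (by linarith) trivial trivial, hγp, hγq⟩

/-- if `H` is undistorted (with finite generating set `T ⊆ S`) and
`|Λ(H)| ≥ 2` in the Floyd boundary, then there is `ε₀ ≥ 0` such that any two distinct
points `p, q ∈ Λ(H)` are joined by a bi-infinite `ε₀`-quasigeodesic edge path in the
Cayley graph `Γ(G,S)` all of whose vertices lie in `H`, whose two ends converge in the
Floyd completion `𝔾` to `p` and `q` respectively. -/
theorem quasigeodesics_in_subgroup_between_limit_points
    {G : Type*} [Group G] (S : Finset G)
    (hsym : ∀ s ∈ S, s⁻¹ ∈ S) (hgen : Subgroup.closure (S : Set G) = ⊤)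
    {𝔾 : Type*} [MetricSpace 𝔾] [CompleteSpace 𝔾] [CompactSpace 𝔾]
    (ι : G → 𝔾)
    (hdist : ∀ x y : G, dist (ι x) (ι y) = floydDist (S : Set G) x y)
    (hdense : DenseRange ι)
    (hnontriv : ∃ a b c : 𝔾, a ∉ Set.range ι ∧ b ∉ Set.range ι ∧ c ∉ Set.range ι ∧
      a ≠ b ∧ a ≠ c ∧ b ≠ c)
    (H : Subgroup G) (T : Finset G) (hTS : T ⊆ S) (hT : (T : Set G) ⊆ (H : Set G))
    (hTgen : Subgroup.closure (T : Set G) = H)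
    (hund : IsUndistorted (S : Set G) (T : Set G) H)
    (hΛ : 2 ≤ (floydLimitSet ι H).encard) :
    ∃ ε₀ : ℝ, 0 ≤ ε₀ ∧
      ∀ p q : 𝔾, p ∈ floydLimitSet ι H → q ∈ floydLimitSet ι H → p ≠ q →
        ∃ γ : ℤ → G, (∀ n : ℤ, γ n ∈ H) ∧
          (∀ n : ℤ, wordDist (S : Set G) (γ n) (γ (n + 1)) = 1) ∧
          (∀ m n : ℤ, m ≤ n →
            ((n - m : ℤ) : ℝ) < ε₀ * (wordDist (S : Set G) (γ m) (γ n) : ℝ) + ε₀) ∧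
          Tendsto (fun k : ℕ => ι (γ (-(k : ℤ)))) atTop (nhds p) ∧
          Tendsto (fun k : ℕ => ι (γ (k : ℤ))) atTop (nhds q) :=
  quasigeodesics_in_subgroup_between_limit_points_general S hsym hgen ι hdist H T hTS hT hund
end
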